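/- For every cone γ ∈ Δ there exists a unique index i ∈ {1, …, m} such that τ_i ≤ γ ≤ σ_i (τ_i is a face of γ and γ is a face of σ_i); moreover this i is the smallest index such that γ is a face of σ_i. -/

import Mathlib

open scoped Classical

noncomputable section

namespace SU

/-- The closed real cone spanned by the vectors `v j`, `j ∈ F`. -/
def realCone {n d : ℕ} (v : Fin d → Fin n → ℤ) (F : Finset (Fin d)) : Set (Fin n → ℝ) :=
  {x | ∃ c : Fin d → ℝ, (∀ j, 0 ≤ c j) ∧ (∀ j, j ∉ F → c j = 0) ∧
    x = ∑ j, c j • fun i => (v j i : ℝ)}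

/-- A complete nonsingular fan in `N = ℤ^n`, recorded combinatorially.  Since the
cones of a nonsingular fan are simplicial, every cone is determined by the set of
its edges; `isCone F` says that the primitive vectors `v j`, `j ∈ F`, span a cone
of the fan `Δ`.  Faces correspond to subsets, and the dimension of a cone is the
cardinality of its edge set. -/
structure Fan (n d : ℕ) where
  /-- the primitive generators of the `d` edges (1-dimensional cones) of the fan -/
  v : Fin d → Fin n → ℤ
  v_inj : Function.Injective v
  /-- `isCone F` : the `v j`, `j ∈ F`, span a cone of the fan -/
  isCone : Finset (Fin d) → Prop
  isCone_empty : isCone ∅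
  isCone_singleton : ∀ j, isCone {j}
  /-- the fan is closed under taking faces -/
  isCone_mono : ∀ {F G}, isCone F → G ⊆ F → isCone G
  /-- any two cones meet along a common face -/
  isCone_inter : ∀ {F G}, isCone F → isCone G → isCone (F ∩ G)
  realCone_inter : ∀ {F G}, isCone F → isCone G →
    realCone v F ∩ realCone v G = realCone v (F ∩ G)
  /-- the fan is complete : the union of its cones is all of `N ⊗ ℝ` -/
  complete : ∀ x : Fin n → ℝ, ∃ F, isCone F ∧ x ∈ realCone v F
  /-- nonsingularity : the generators of each cone form part of a `ℤ`-basis of `N` -/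
  unimodular : ∀ {F}, isCone F → ∃ (b : Module.Basis (Fin n) ℤ (Fin n → ℤ))
    (ι : Fin d → Fin n), Set.InjOn ι ↑F ∧ ∀ j ∈ F, b (ι j) = v j

/-- An enumeration `σ 0, …, σ (m-1)` of the `n`-dimensional cones of the fan. -/
structure MaxOrder {n d : ℕ} (Δ : Fan n d) (m : ℕ) where
  σ : Fin m → Finset (Fin d)
  isCone_σ : ∀ i, Δ.isCone (σ i)
  card_σ : ∀ i, (σ i).card = n
  σ_inj : Function.Injective σ
  σ_surj : ∀ F, Δ.isCone F → F.card = n → ∃ i, σ i = F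

/-- `τ i` : the intersection of `σ i` with those cones `σ k`, `k > i`, with
`dim (σ i ∩ σ k) = n - 1`. -/
def MaxOrder.tau {n d m : ℕ} {Δ : Fan n d} (o : MaxOrder Δ m) (i : Fin m) :
    Finset (Fin d) :=
  (o.σ i).filter fun j => ∀ k, i < k → ((o.σ i) ∩ (o.σ k)).card = n - 1 → j ∈ o.σ k

/-- Property (*) : `τ i` a face of `σ j` implies `i ≤ j`. -/
def MaxOrder.Star {n d m : ℕ} {Δ : Fan n d} (o : MaxOrder Δ m) : Prop :=
  ∀ i j, o.tau i ⊆ o.σ j → i ≤ j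

/-- the set `{1, …, n} ⊆ {1, …, d}` of the first `n` edges -/
def firstn {n d : ℕ} (hnd : n ≤ d) : Finset (Fin d) :=
  Finset.univ.map ⟨Fin.castLE hnd, Fin.castLE_injective hnd⟩

variable {n d : ℕ} (S : Type*) [Ring S]

/-- The polynomial algebra over a (possibly noncommutative) ring `S` in `d`
central, pairwise commuting, variables. -/
abbrev Poly (S : Type*) [Ring S] (d : ℕ) : Type _ := AddMonoidAlgebra S (Fin d →₀ ℕ)

/-- the variable `x j` -/
def X (j : Fin d) : Poly S d := AddMonoidAlgebra.single (Finsupp.single j 1) 1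

/-- the scalar `s ∈ S` as a polynomial -/
def Cc (s : S) : Poly S d := AddMonoidAlgebra.single 0 s

/-- The square-free monomial `∏_{j ∈ F} x j`. -/
def mon (F : Finset (Fin d)) : Poly S d :=
  AddMonoidAlgebra.single (∑ j ∈ F, Finsupp.single j 1) 1

lemma commute_X (j k : Fin d) : Commute (X S j) (X S k) := by
  show X S j * X S k = X S k * X S j
  simp only [X]
  rw [AddMonoidAlgebra.single_mul_single, AddMonoidAlgebra.single_mul_single, add_comm]

lemma commute_one_sub_X_pow (j k : Fin d) (a b : ℕ) :
    Commute ((1 - X S j) ^ a) ((1 - X S k) ^ b) :=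
  ((Commute.one_left (1 - X S k)).sub_left
    ((Commute.one_right (X S j)).sub_right (commute_X S j k))).pow_pow a b

/-- the relation (on the polynomial ring) identifying every member of `gens`
with `0`; the corresponding `RingQuot` is the quotient by the two-sided ideal
generated by `gens`. -/
def relOf (gens : Set (Poly S d)) : Poly S d → Poly S d → Prop :=
  fun p q => p ∈ gens ∧ q = 0

/-- type (i) generators : the monomials `x_{j₁} ⋯ x_{j_k}` (distinct indices)
such that `v_{j₁}, …, v_{j_k}` do not span a cone of `Δ`. -/
def gensCone (Δ : Fan n d) : Set (Poly S d) :=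
  {p | ∃ F : Finset (Fin d), ¬ Δ.isCone F ∧ p = mon S F}

/-- type (ii) generators : the elements `y i = ∑_j ⟨u i, v j⟩ x j - r i`. -/
def gensLin (Δ : Fan n d) (uu : Fin n → ((Fin n → ℤ) →ₗ[ℤ] ℤ)) (r : Fin n → S) :
    Set (Poly S d) :=
  {p | ∃ i : Fin n, p = (∑ j, (uu i (Δ.v j)) • X S j) - Cc S (r i)}

/-- the generators of the ideal `I_S` -/
def gensI (Δ : Fan n d) (uu : Fin n → ((Fin n → ℤ) →ₗ[ℤ] ℤ)) (r : Fin n → S) :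
    Set (Poly S d) :=
  gensCone S Δ ∪ gensLin S Δ uu r

/-- the ring `R = S[x₁,…,x_d]/I_S` -/
abbrev RRing (Δ : Fan n d) (uu : Fin n → ((Fin n → ℤ) →ₗ[ℤ] ℤ)) (r : Fin n → S) :
    Type _ :=
  RingQuot (relOf S (gensI S Δ uu r))

/-- the quotient map `S[x₁,…,x_d] → R` -/
def mkR (Δ : Fan n d) (uu : Fin n → ((Fin n → ℤ) →ₗ[ℤ] ℤ)) (r : Fin n → S) :
    Poly S d →+* RRing S Δ uu r :=
  RingQuot.mkRingHom _

/-- `∏_{j : ⟨u, v j⟩ > 0} (1 - x j) ^ ⟨u, v j⟩` -/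
def zPos (Δ : Fan n d) (u : (Fin n → ℤ) →ₗ[ℤ] ℤ) : Poly S d :=
  Finset.univ.noncommProd (fun j => (1 - X S j) ^ (u (Δ.v j)).toNat)
    (fun j _ k _ _ => commute_one_sub_X_pow S j k _ _)

/-- `∏_{j : ⟨u, v j⟩ < 0} (1 - x j) ^ (-⟨u, v j⟩)` -/
def zNeg (Δ : Fan n d) (u : (Fin n → ℤ) →ₗ[ℤ] ℤ) : Poly S d :=
  Finset.univ.noncommProd (fun j => (1 - X S j) ^ (-(u (Δ.v j))).toNat)
    (fun j _ k _ _ => commute_one_sub_X_pow S j k _ _)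

lemma central_commute (ru : Fin n → Sˣ)
    (hcen : ∀ i, (ru i : S) ∈ Subring.center S) (i k : Fin n) :
    Commute (ru i) (ru k) := by
  show ru i * ru k = ru k * ru i
  exact Units.ext (by simpa using (Subring.mem_center_iff.mp (hcen i) (ru k)).symm)

/-- `r(u) = ∏_i r i ^ a i` for `u = ∑ a i • u i`, the `r i` being invertible. -/
def rOf (ru : Fin n → Sˣ) (hc : ∀ i k, Commute (ru i) (ru k)) (a : Fin n → ℤ) : S :=
  (Finset.univ.noncommProd (fun i => ru i ^ a i)
    (fun i _ k _ _ => (hc i k).zpow_zpow _ _) : Sˣ)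

/-- type (ii′) generators : the elements `z(u)` for `u ∈ M` -/
def gensZ (Δ : Fan n d) (uu : Fin n → ((Fin n → ℤ) →ₗ[ℤ] ℤ)) (ru : Fin n → Sˣ)
    (hc : ∀ i k, Commute (ru i) (ru k)) : Set (Poly S d) :=
  {p | ∃ a : Fin n → ℤ, p = zPos S Δ (∑ i, a i • uu i) -
    Cc S (rOf S ru hc a) * zNeg S Δ (∑ i, a i • uu i)}

/-- the generators of the ideal `𝓘_S` -/
def gensII (Δ : Fan n d) (uu : Fin n → ((Fin n → ℤ) →ₗ[ℤ] ℤ)) (ru : Fin n → Sˣ)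
    (hc : ∀ i k, Commute (ru i) (ru k)) : Set (Poly S d) :=
  gensCone S Δ ∪ gensZ S Δ uu ru hc

/-- the ring `ℛ = S[x₁,…,x_d]/𝓘_S` -/
abbrev RcalRing (Δ : Fan n d) (uu : Fin n → ((Fin n → ℤ) →ₗ[ℤ] ℤ)) (ru : Fin n → Sˣ)
    (hc : ∀ i k, Commute (ru i) (ru k)) : Type _ :=
  RingQuot (relOf S (gensII S Δ uu ru hc))

/-- the quotient map `S[x₁,…,x_d] → ℛ` -/
def mkRcal (Δ : Fan n d) (uu : Fin n → ((Fin n → ℤ) →ₗ[ℤ] ℤ)) (ru : Fin n → Sˣ)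
    (hc : ∀ i k, Commute (ru i) (ru k)) : Poly S d →+* RcalRing S Δ uu ru hc :=
  RingQuot.mkRingHom _

section Statement10Aux

variable {n d : ℕ}

/-- realization of the integer vector `v j` in `ℝ^n` -/
def vR (v : Fin d → Fin n → ℤ) (j : Fin d) : Fin n → ℝ := fun i => (v j i : ℝ)

lemma mem_realCone_iff {v : Fin d → Fin n → ℤ} {F : Finset (Fin d)} {x : Fin n → ℝ} :
    x ∈ realCone v F ↔ ∃ c : Fin d → ℝ, (∀ j, 0 ≤ c j) ∧ (∀ j, j ∉ F → c j = 0) ∧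
      x = ∑ j, c j • vR v j := Iff.rfl

lemma realCone_elim {v : Fin d → Fin n → ℤ} {F : Finset (Fin d)} {x : Fin n → ℝ}
    (h : x ∈ realCone v F) : ∃ c : Fin d → ℝ, (∀ j, 0 ≤ c j) ∧ (∀ j, j ∉ F → c j = 0) ∧
      x = ∑ j, c j • vR v j := h

/-- extension of a `ℤ`-linear functional to an `ℝ`-linear functional -/
def realify (f : (Fin n → ℤ) →ₗ[ℤ] ℤ) : (Fin n → ℝ) →ₗ[ℝ] ℝ :=
  ∑ i, ((f fun j => if i = j then 1 else 0 : ℤ) : ℝ) • LinearMap.proj i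

lemma realify_int (f : (Fin n → ℤ) →ₗ[ℤ] ℤ) (w : Fin n → ℤ) :
    realify f (fun i => (w i : ℝ)) = (f w : ℝ) := by
  rw [LinearMap.pi_apply_eq_sum_univ f w]
  simp only [realify, LinearMap.sum_apply, LinearMap.smul_apply, LinearMap.proj_apply,
    smul_eq_mul, zsmul_eq_mul, Int.cast_sum, Int.cast_mul]
  exact Finset.sum_congr rfl fun i _ => mul_comm _ _

lemma Fan.phi_vR (Δ : Fan n d) {G : Finset (Fin d)} (b : Module.Basis (Fin n) ℤ (Fin n → ℤ))
    (ι : Fin d → Fin n) (hinj : Set.InjOn ι ↑G) (hb : ∀ j ∈ G, b (ι j) = Δ.v j)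
    {j k : Fin d} (hj : j ∈ G) (hk : k ∈ G) :
    realify (b.coord (ι j)) (vR Δ.v k) = if k = j then 1 else 0 := by
  have hv : vR Δ.v k = fun i => ((b (ι k)) i : ℝ) := by rw [hb k hk]; rfl
  rw [hv, realify_int, Module.Basis.coord_apply, Module.Basis.repr_self, Finsupp.single_apply]
  by_cases h : k = j
  · subst h; simp
  · have hij : ι k ≠ ι j := fun he => h (hinj hk hj he)
    rw [if_neg hij, if_neg h, Int.cast_zero]

lemma Fan.phi_sum (Δ : Fan n d) {G : Finset (Fin d)} (b : Module.Basis (Fin n) ℤ (Fin n → ℤ))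
    (ι : Fin d → Fin n) (hinj : Set.InjOn ι ↑G) (hb : ∀ j ∈ G, b (ι j) = Δ.v j)
    {j : Fin d} (hj : j ∈ G) (c : Fin d → ℝ) (h0 : ∀ k, k ∉ G → c k = 0) :
    realify (b.coord (ι j)) (∑ k, c k • vR Δ.v k) = c j := by
  rw [map_sum, Finset.sum_eq_single j]
  · rw [map_smul, Δ.phi_vR b ι hinj hb hj hj, if_pos rfl, smul_eq_mul, mul_one]
  · intro k _ hkj
    by_cases hkG : k ∈ G
    · rw [map_smul, Δ.phi_vR b ι hinj hb hj hkG, if_neg hkj, smul_zero]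
    · rw [h0 k hkG, zero_smul, map_zero]
  · intro h; exact absurd (Finset.mem_univ j) h

lemma Fan.coeff_unique (Δ : Fan n d) {G : Finset (Fin d)} (hG : Δ.isCone G)
    {c c' : Fin d → ℝ} (h0 : ∀ j, j ∉ G → c j = 0) (h0' : ∀ j, j ∉ G → c' j = 0)
    (h : ∑ j, c j • vR Δ.v j = ∑ j, c' j • vR Δ.v j) : c = c' := by
  obtain ⟨b, ι, hinj, hb⟩ := Δ.unimodular hG
  funext j
  by_cases hj : j ∈ G
  · have hφ := congrArg (realify (b.coord (ι j))) h
    rwa [Δ.phi_sum b ι hinj hb hj c h0, Δ.phi_sum b ι hinj hb hj c' h0'] at hφ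
  · rw [h0 j hj, h0' j hj]

lemma sum_indicator (v : Fin d → Fin n → ℤ) (γ : Finset (Fin d)) :
    ∑ j ∈ γ, vR v j = ∑ j, (if j ∈ γ then (1:ℝ) else 0) • vR v j := by
  simp only [ite_smul, one_smul, zero_smul]
  rw [Finset.sum_ite_mem, Finset.univ_inter]

lemma sum_mem_realCone (v : Fin d → Fin n → ℤ) (γ : Finset (Fin d)) :
    (∑ j ∈ γ, vR v j) ∈ realCone v γ := by
  refine ⟨fun j => if j ∈ γ then 1 else 0, ?_, fun j hj => if_neg hj, sum_indicator v γ⟩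
  intro j; by_cases h : j ∈ γ <;> simp [h]

lemma Fan.subset_of_sum_mem (Δ : Fan n d) {γ G : Finset (Fin d)} (hγ : Δ.isCone γ)
    (hG : Δ.isCone G) (h : (∑ j ∈ γ, vR Δ.v j) ∈ realCone Δ.v G) : γ ⊆ G := by
  have hmem : (∑ j ∈ γ, vR Δ.v j) ∈ realCone Δ.v (γ ∩ G) := by
    rw [← Δ.realCone_inter hγ hG]; exact ⟨sum_mem_realCone Δ.v γ, h⟩
  obtain ⟨c, hc0, hcs, hcsum⟩ := realCone_elim hmem
  intro j hjγ
  have hind : (fun k => if k ∈ γ then (1:ℝ) else 0) = c := by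
    apply Δ.coeff_unique hγ
    · intro k hk; simp [hk]
    · intro k hk; exact hcs k fun hk' => hk (Finset.mem_of_mem_inter_left hk')
    · rw [← sum_indicator]; exact hcsum
  by_contra hjG
  have hc0j : c j = 0 := hcs j (by simp [hjG])
  have h1 : (1:ℝ) = 0 := by
    have := congrFun hind j
    rwa [if_pos hjγ, hc0j] at this
  norm_num at h1

lemma Fan.pigeon (Δ : Fan n d) {γ : Finset (Fin d)} (hγ : Δ.isCone γ) (w : Fin n → ℝ) :
    ∃ G, Δ.isCone G ∧ γ ⊆ G ∧ ∃ t : ℝ, 0 < t ∧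
      ((∑ j ∈ γ, vR Δ.v j) + t • w) ∈ realCone Δ.v G := by
  set y0 := ∑ j ∈ γ, vR Δ.v j with hy0
  have hex : ∀ k : ℕ, ∃ F, Δ.isCone F ∧ (y0 + ((k:ℝ)+1)⁻¹ • w) ∈ realCone Δ.v F :=
    fun k => Δ.complete _
  choose f hf1 hf2 using hex
  obtain ⟨G, hGinf⟩ := Finite.exists_infinite_fiber f
  have hSinf : (f ⁻¹' {G}).Infinite := Set.infinite_coe_iff.mp hGinf
  have hGc : Δ.isCone G := by
    obtain ⟨k, hk⟩ := hSinf.nonempty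
    have hfk : f k = G := hk
    rw [← hfk]; exact hf1 k
  have hmem : ∀ k, k ∈ f ⁻¹' {G} → (y0 + ((k:ℝ)+1)⁻¹ • w) ∈ realCone Δ.v G := by
    intro k hk
    have hfk : f k = G := hk
    rw [← hfk]; exact hf2 k
  obtain ⟨k1, hk1, -⟩ := hSinf.exists_gt 0
  obtain ⟨k2, hk2, hk12⟩ := hSinf.exists_gt k1
  set t1 : ℝ := ((k1:ℝ)+1)⁻¹ with ht1def
  set t2 : ℝ := ((k2:ℝ)+1)⁻¹ with ht2def
  have ht1 : 0 < t1 := by positivity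
  have ht2 : 0 < t2 := by positivity
  have ht21 : t2 < t1 := by
    rw [ht1def, ht2def]
    apply inv_strictAnti₀ (by positivity)
    have : (k1:ℝ) < (k2:ℝ) := by exact_mod_cast hk12
    linarith
  have htd : t1 - t2 ≠ 0 := by linarith
  obtain ⟨c1, hc10, hc1s, hc1e⟩ := realCone_elim (hmem k1 hk1)
  obtain ⟨c2, hc20, hc2s, hc2e⟩ := realCone_elim (hmem k2 hk2)
  set β : Fin d → ℝ := fun j => (c1 j - c2 j) / (t1 - t2) with hβdef
  set α : Fin d → ℝ := fun j => c1 j - t1 * β j with hαdef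
  have hβsum : ∑ j, β j • vR Δ.v j = w := by
    have key : (t1 - t2) • ∑ j, β j • vR Δ.v j = (t1 - t2) • w := by
      rw [Finset.smul_sum]
      have hterm : ∀ j : Fin d, (t1 - t2) • (β j • vR Δ.v j)
          = c1 j • vR Δ.v j - c2 j • vR Δ.v j := by
        intro j
        rw [smul_smul, hβdef, mul_div_cancel₀ _ htd, sub_smul]
      rw [Finset.sum_congr rfl fun j _ => hterm j, Finset.sum_sub_distrib, ← hc1e, ← hc2e]
      module
    exact smul_right_injective _ htd key
  have hαsum : ∑ j, α j • vR Δ.v j = y0 := by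
    have key : ∑ j, α j • vR Δ.v j
        = (∑ j, c1 j • vR Δ.v j) - t1 • ∑ j, β j • vR Δ.v j := by
      rw [Finset.smul_sum, ← Finset.sum_sub_distrib]
      refine Finset.sum_congr rfl fun j _ => ?_
      rw [hαdef, sub_smul, smul_smul]
    rw [key, hβsum, ← hc1e]
    module
  have hβs : ∀ j, j ∉ G → β j = 0 := by
    intro j hj; rw [hβdef]; simp [hc1s j hj, hc2s j hj]
  have hαs : ∀ j, j ∉ G → α j = 0 := by
    intro j hj; rw [hαdef]; simp [hc1s j hj, hβs j hj]
  have hck : ∀ k, k ∈ f ⁻¹' {G} → ∀ c : Fin d → ℝ, (∀ j, j ∉ G → c j = 0) →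
      (y0 + ((k:ℝ)+1)⁻¹ • w = ∑ j, c j • vR Δ.v j) →
      ∀ j, c j = α j + ((k:ℝ)+1)⁻¹ * β j := by
    intro k _ c hcs hce j
    have hfun : c = fun j => α j + ((k:ℝ)+1)⁻¹ * β j := by
      apply Δ.coeff_unique hGc hcs
      · intro j hj; rw [hαs j hj, hβs j hj]; ring
      · rw [← hce]
        have hsplit : ∑ j, (α j + ((k:ℝ)+1)⁻¹ * β j) • vR Δ.v j
            = (∑ j, α j • vR Δ.v j) + ((k:ℝ)+1)⁻¹ • ∑ j, β j • vR Δ.v j := by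
          rw [Finset.smul_sum, ← Finset.sum_add_distrib]
          refine Finset.sum_congr rfl fun j _ => ?_
          rw [add_smul, smul_smul]
        rw [hsplit, hαsum, hβsum]
    rw [hfun]
  have hα0 : ∀ j, 0 ≤ α j := by
    intro j
    by_contra hneg
    push_neg at hneg
    obtain ⟨k, hk, hklt⟩ := hSinf.exists_gt ⌈β j / (-α j)⌉₊
    obtain ⟨c, hc0, hcs, hce⟩ := realCone_elim (hmem k hk)
    have h1 : c j = α j + ((k:ℝ)+1)⁻¹ * β j := hck k hk c hcs hce j
    have h2 : 0 ≤ α j + ((k:ℝ)+1)⁻¹ * β j := h1 ▸ hc0 j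
    have hk1pos : (0:ℝ) < (k:ℝ)+1 := by positivity
    have h3 : -α j ≤ ((k:ℝ)+1)⁻¹ * β j := by linarith
    rw [inv_mul_eq_div] at h3
    have h4 : (-α j) * ((k:ℝ)+1) ≤ β j := (le_div_iff₀ hk1pos).mp h3
    have h5 : β j / (-α j) ≤ (k:ℝ) := by
      refine le_trans (Nat.le_ceil _) ?_
      exact_mod_cast hklt.le
    have h6 : β j ≤ (k:ℝ) * (-α j) := (div_le_iff₀ (by linarith)).mp h5
    nlinarith
  refine ⟨G, hGc, ?_, t1, ht1, hmem k1 hk1⟩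
  exact Δ.subset_of_sum_mem hγ hGc ⟨α, hα0, hαs, hαsum.symm⟩

lemma Fan.card_le (Δ : Fan n d) {γ : Finset (Fin d)} (hγ : Δ.isCone γ) : γ.card ≤ n := by
  obtain ⟨b, ι, hinj, -⟩ := Δ.unimodular hγ
  calc γ.card = (γ.image ι).card := (Finset.card_image_of_injOn hinj).symm
    _ ≤ (Finset.univ : Finset (Fin n)).card := Finset.card_le_card (Finset.subset_univ _)
    _ = n := by simp

lemma Fan.exists_ssuperset (Δ : Fan n d) {γ : Finset (Fin d)} (hγ : Δ.isCone γ)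
    (hlt : γ.card < n) : ∃ G, Δ.isCone G ∧ γ ⊂ G := by
  obtain ⟨b, ι, hinj, hb⟩ := Δ.unimodular hγ
  have himg : (γ.image ι).card < n := by
    rwa [Finset.card_image_of_injOn hinj]
  obtain ⟨i0, hi0⟩ : ∃ i0 : Fin n, i0 ∉ γ.image ι := by
    by_contra hcon
    push_neg at hcon
    have huniv : (Finset.univ : Finset (Fin n)) ⊆ γ.image ι := fun i _ => hcon i
    have := Finset.card_le_card huniv
    simp only [Finset.card_univ, Fintype.card_fin] at this
    omega
  set w : Fin n → ℝ := fun i => ((b i0) i : ℝ) with hwdef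
  obtain ⟨G, hG, hsub, t, ht, hmem⟩ := Δ.pigeon hγ w
  refine ⟨G, hG, Finset.ssubset_iff_subset_ne.mpr ⟨hsub, ?_⟩⟩
  intro heq
  rw [← heq] at hmem
  obtain ⟨c, hc0, hcs, hce⟩ := realCone_elim hmem
  set φ := realify (b.coord i0) with hφdef
  have hφv : ∀ j ∈ γ, φ (vR Δ.v j) = 0 := by
    intro j hj
    have hv : vR Δ.v j = fun i => ((b (ι j)) i : ℝ) := by rw [hb j hj]; rfl
    rw [hφdef, hv, realify_int, Module.Basis.coord_apply, Module.Basis.repr_self, Finsupp.single_apply]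
    rw [if_neg (by intro h; exact hi0 (h ▸ Finset.mem_image_of_mem ι hj)), Int.cast_zero]
  have hφsum : φ (∑ j, c j • vR Δ.v j) = 0 := by
    rw [map_sum]
    apply Finset.sum_eq_zero
    intro j _
    by_cases hj : j ∈ γ
    · rw [map_smul, hφv j hj, smul_zero]
    · rw [hcs j hj, zero_smul, map_zero]
  have hφy0 : φ (∑ j ∈ γ, vR Δ.v j) = 0 := by
    rw [map_sum]; exact Finset.sum_eq_zero fun j hj => hφv j hj
  have hφw : φ w = 1 := by
    rw [hφdef, hwdef, realify_int, Module.Basis.coord_apply, Module.Basis.repr_self, Finsupp.single_apply,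
      if_pos rfl, Int.cast_one]
  have hcontr := congrArg φ hce
  rw [map_add, map_smul, hφy0, hφw, hφsum, smul_eq_mul, mul_one, zero_add] at hcontr
  exact absurd hcontr (ne_of_gt ht)

lemma Fan.exists_max_superset (Δ : Fan n d) {γ : Finset (Fin d)} (hγ : Δ.isCone γ) :
    ∃ F, Δ.isCone F ∧ F.card = n ∧ γ ⊆ F := by
  have H : ∀ k : ℕ, ∀ γ : Finset (Fin d), Δ.isCone γ → n - γ.card ≤ k →
      ∃ F, Δ.isCone F ∧ F.card = n ∧ γ ⊆ F := by
    intro k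
    induction k with
    | zero =>
      intro γ hγ h0
      have hle := Δ.card_le hγ
      have heq : γ.card = n := by omega
      exact ⟨γ, hγ, heq, subset_rfl⟩
    | succ k ih =>
      intro γ hγ hk
      by_cases he : γ.card = n
      · exact ⟨γ, hγ, he, subset_rfl⟩
      · have hlt : γ.card < n := lt_of_le_of_ne (Δ.card_le hγ) he
        obtain ⟨G, hG, hss⟩ := Δ.exists_ssuperset hγ hlt
        have hcard : γ.card < G.card := Finset.card_lt_card hss
        obtain ⟨F, h1, h2, h3⟩ := ih G hG (by omega)
        exact ⟨F, h1, h2, hss.subset.trans h3⟩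
  exact H n γ hγ (by omega)

lemma Fan.wall (Δ : Fan n d) {σ : Finset (Fin d)} (hσ : Δ.isCone σ)
    (hcard : σ.card = n) {j0 : Fin d} (hj0 : j0 ∈ σ) :
    ∃ G, Δ.isCone G ∧ G.card = n ∧ σ.erase j0 ⊆ G ∧ j0 ∉ G := by
  set F := σ.erase j0 with hFdef
  have hFc : Δ.isCone F := Δ.isCone_mono hσ (Finset.erase_subset _ _)
  obtain ⟨b, ι, hinj, hb⟩ := Δ.unimodular hσ
  obtain ⟨G, hG, hsub, t, ht, hmem⟩ := Δ.pigeon hFc (-(vR Δ.v j0))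
  set φ := realify (b.coord (ι j0)) with hφdef
  have hφv : ∀ k ∈ σ, φ (vR Δ.v k) = if k = j0 then 1 else 0 :=
    fun k hk => Δ.phi_vR b ι hinj hb hj0 hk
  have hφy0 : φ (∑ j ∈ F, vR Δ.v j) = 0 := by
    rw [map_sum]
    apply Finset.sum_eq_zero
    intro k hk
    rw [hφv k (Finset.mem_of_mem_erase hk), if_neg (Finset.ne_of_mem_erase hk)]
  have hφx : φ ((∑ j ∈ F, vR Δ.v j) + t • (-(vR Δ.v j0))) = -t := by
    rw [map_add, map_smul, map_neg, hφy0, hφv j0 hj0, if_pos rfl, zero_add, smul_neg,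
      smul_eq_mul, mul_one]
  have hGle : G.card ≤ n := Δ.card_le hG
  have hFcard : F.card = n - 1 := by
    rw [hFdef, Finset.card_erase_of_mem hj0, hcard]
  have hj0G : j0 ∉ G := by
    intro hj0G
    have hσG : σ ⊆ G := by
      intro x hx
      by_cases hxj : x = j0
      · rw [hxj]; exact hj0G
      · exact hsub (Finset.mem_erase.mpr ⟨hxj, hx⟩)
    have hGσ : σ = G := Finset.eq_of_subset_of_card_le hσG (by omega)
    rw [← hGσ] at hmem
    obtain ⟨c, hc0, hcs, hce⟩ := realCone_elim hmem
    have hval : φ (∑ j, c j • vR Δ.v j) = c j0 := Δ.phi_sum b ι hinj hb hj0 c hcs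
    have hcontr := congrArg φ hce
    rw [hφx, hval] at hcontr
    linarith [hc0 j0]
  have hGF : G ≠ F := by
    intro heq
    rw [heq] at hmem
    obtain ⟨c, hc0, hcs, hce⟩ := realCone_elim hmem
    have hval : φ (∑ j, c j • vR Δ.v j) = 0 := by
      rw [map_sum]
      apply Finset.sum_eq_zero
      intro k _
      by_cases hkF : k ∈ F
      · rw [map_smul, hφv k (Finset.mem_of_mem_erase hkF),
          if_neg (Finset.ne_of_mem_erase hkF), smul_zero]
      · rw [hcs k hkF, zero_smul, map_zero]
    have hcontr := congrArg φ hce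
    rw [hφx, hval] at hcontr
    linarith
  have hss : F ⊂ G := Finset.ssubset_iff_subset_ne.mpr ⟨hsub, fun h => hGF h.symm⟩
  have hcard2 : n - 1 < G.card := hFcard ▸ Finset.card_lt_card hss
  exact ⟨G, hG, by omega, hsub, hj0G⟩

end Statement10Aux

theorem statement10 {n d m : ℕ} (hn : 1 ≤ n)
    (Δ : Fan n d) (o : MaxOrder Δ m) (hstar : o.Star) :
    ∀ γ : Finset (Fin d), Δ.isCone γ →
      ∃ i : Fin m, (o.tau i ⊆ γ ∧ γ ⊆ o.σ i) ∧
        (∀ j : Fin m, (o.tau j ⊆ γ ∧ γ ⊆ o.σ j) → j = i) ∧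
        ∀ j : Fin m, γ ⊆ o.σ j → i ≤ j := by
  intro γ hγ
  obtain ⟨Fmax, hFc, hFcard, hγF⟩ := Δ.exists_max_superset hγ
  obtain ⟨i0, hi0⟩ := o.σ_surj Fmax hFc hFcard
  have hne : (Finset.univ.filter fun i => γ ⊆ o.σ i).Nonempty :=
    ⟨i0, Finset.mem_filter.mpr ⟨Finset.mem_univ _, hi0 ▸ hγF⟩⟩
  set i := (Finset.univ.filter fun i => γ ⊆ o.σ i).min' hne with hidef
  have hiγ : γ ⊆ o.σ i :=
    (Finset.mem_filter.mp (Finset.min'_mem _ hne)).2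
  have hmin : ∀ j, γ ⊆ o.σ j → i ≤ j := fun j hj =>
    Finset.min'_le _ j (Finset.mem_filter.mpr ⟨Finset.mem_univ _, hj⟩)
  have hτ : o.tau i ⊆ γ := by
    intro j0 hj0
    have hj0σ : j0 ∈ o.σ i := (Finset.mem_filter.mp hj0).1
    have hprop := (Finset.mem_filter.mp hj0).2
    by_contra hj0γ
    obtain ⟨G, hG, hGcard, hFsub, hj0G⟩ := Δ.wall (o.isCone_σ i) (o.card_σ i) hj0σ
    obtain ⟨k, hk⟩ := o.σ_surj G hG hGcard
    have hγG : γ ⊆ G := fun x hx =>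
      hFsub (Finset.mem_erase.mpr ⟨fun h => hj0γ (h ▸ hx), hiγ hx⟩)
    have hik : i ≤ k := hmin k (by rw [hk]; exact hγG)
    have hik' : i ≠ k := by
      intro h
      exact hj0G (by rw [← hk, ← h]; exact hj0σ)
    have hcardik : (o.σ i ∩ o.σ k).card = n - 1 := by
      have h1 : (o.σ i).erase j0 ⊆ o.σ i ∩ o.σ k := by
        intro x hx
        exact Finset.mem_inter.mpr ⟨Finset.mem_of_mem_erase hx, by rw [hk]; exact hFsub hx⟩
      have h2 : o.σ i ∩ o.σ k ⊆ (o.σ i).erase j0 := by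
        intro x hx
        obtain ⟨hx1, hx2⟩ := Finset.mem_inter.mp hx
        refine Finset.mem_erase.mpr ⟨fun h => ?_, hx1⟩
        exact hj0G (by rw [← hk, ← h]; exact hx2)
      rw [Finset.Subset.antisymm h2 h1, Finset.card_erase_of_mem hj0σ, o.card_σ i]
    have hj0k : j0 ∈ o.σ k := hprop k (lt_of_le_of_ne hik hik') hcardik
    exact hj0G (by rw [← hk]; exact hj0k)
  refine ⟨i, ⟨hτ, hiγ⟩, ?_, hmin⟩
  rintro j ⟨hτj, hjγ⟩
  exact le_antisymm (hstar j i (hτj.trans hiγ)) (hmin j hjγ)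

end SU
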